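/- arXiv:1810.01031 — 3 statements merged into one kernel-verified Lean document; each statement's English description precedes it below -/
import Mathlib

section
/- Let X be a topological space, (U_i)_{i∈I} and (V_i)_{i∈I} indexed open covers of X such that the family of closures (cl(V_i))_{i∈I} is locally finite and cl(V_i) ⊂ U_i for all i. Let F be a sheaf of sets on X and s_i ∈ F(U_i) a family of sections. Define A = { x ∈ X : for all i,j ∈ I with x ∈ U_i ∩ U_j, the germs of s_i and s_j at x agree }. Then there exists an open subset W ⊂ X with A ⊂ W and a section t ∈ F(W) such that t restricted to W ∩ V_i equals s_i restricted to W ∩ V_i, for every i ∈ I. -/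
/-!
Let `W` be the set of points `x` at which the germs of `s i` and `s j` agree whenever
`x ∈ closure (V i) ∩ closure (V j)`. The locus where two germs agree is open, so the complement
of `W` is a union of the closed sets `closure (V i) ∩ closure (V j)` minus such open loci; this
family is locally finite, hence `W` is open. It contains `A` because `closure (V i) ⊆ U i`, and
over `W ∩ V i ∩ V j` the restrictions of `s i` and `s j` have the same germ everywhere, so the
sheaf condition glues the restrictions of the `s i` to the cover `W ∩ V i` of `W`.
-/

open TopologicalSpace CategoryTheory Opposite

universe u

theorem LocallyFinite.inter_prod {ι ι' X : Type*} [TopologicalSpace X] {f : ι → Set X}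
    {g : ι' → Set X} (hf : LocallyFinite f) (hg : LocallyFinite g) :
    LocallyFinite fun p : ι × ι' => f p.1 ∩ g p.2 := by
  intro x
  obtain ⟨N, hN, hfinN⟩ := hf x
  obtain ⟨N', hN', hfinN'⟩ := hg x
  refine ⟨N ∩ N', Filter.inter_mem hN hN', (hfinN.prod hfinN').subset ?_⟩
  rintro ⟨i, j⟩ ⟨y, ⟨hyi, hyj⟩, hyN, hyN'⟩
  exact ⟨⟨y, hyi, hyN⟩, y, hyj, hyN'⟩

theorem isOpen_setOf_forall_mem_of_mem_of_mem {ι X : Type*} [TopologicalSpace X]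
    {C : ι → Set X} (hC : LocallyFinite C) (hCc : ∀ i, IsClosed (C i))
    {O : ι → ι → Set X} (hO : ∀ i j, IsOpen (O i j)) :
    IsOpen {x | ∀ i j, x ∈ C i → x ∈ C j → x ∈ O i j} := by
  have hcompl : {x | ∀ i j, x ∈ C i → x ∈ C j → x ∈ O i j}ᶜ =
      ⋃ p : ι × ι, C p.1 ∩ C p.2 ∩ (O p.1 p.2)ᶜ := by
    ext x
    simp [and_assoc]
  rw [← isClosed_compl_iff, hcompl]
  exact ((hC.inter_prod hC).subset fun _ => Set.inter_subset_left).isClosed_iUnion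
    fun p => ((hCc p.1).inter (hCc p.2)).inter (hO p.1 p.2).isClosed_compl

theorem TopCat.Presheaf.isOpen_setOf_germ_eq {X : TopCat.{u}} (F : X.Presheaf (Type u))
    {U V : Opens X} (a : F.obj (op U)) (b : F.obj (op V)) :
    IsOpen {x | ∃ (hU : x ∈ U) (hV : x ∈ V), F.germ U x hU a = F.germ V x hV b} := by
  rw [isOpen_iff_forall_mem_open]
  rintro x ⟨hU, hV, hab⟩
  obtain ⟨W, hxW, iU, iV, hW⟩ := F.germ_eq x hU hV a b hab
  exact ⟨W, fun y hy => ⟨iU.le hy, iV.le hy, F.germ_ext W hy iU iV hW⟩, W.isOpen, hxW⟩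

theorem partial_gluing_general
    {X : TopCat.{u}} (F : TopCat.Sheaf (Type u) X) {I : Type u}
    (U V : I → Opens X)
    (hVcov : ∀ x : X, ∃ i, x ∈ V i)
    (hVU : ∀ i, closure (V i : Set X) ⊆ (U i : Set X))
    (hlf : LocallyFinite fun i => closure (V i : Set X))
    (s : ∀ i, F.val.obj (op (U i))) :
    ∃ (W : Opens X) (t : F.val.obj (op W)),
      (∀ x : X,
        (∀ i j (hi : x ∈ U i) (hj : x ∈ U j),
          F.presheaf.germ (U i) x hi (s i) = F.presheaf.germ (U j) x hj (s j)) → x ∈ W) ∧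
      ∀ i, F.val.map (homOfLE (inf_le_left : W ⊓ V i ≤ W)).op t =
        F.val.map (homOfLE (show W ⊓ V i ≤ U i from fun x hx =>
          hVU i (subset_closure hx.2))).op (s i) := by
  let agree i j : Set X := {x | ∃ (hi : x ∈ U i) (hj : x ∈ U j),
    F.presheaf.germ (U i) x hi (s i) = F.presheaf.germ (U j) x hj (s j)}
  let W : Opens X :=
    ⟨{x | ∀ i j, x ∈ closure (V i : Set X) → x ∈ closure (V j : Set X) → x ∈ agree i j},
      isOpen_setOf_forall_mem_of_mem_of_mem hlf (fun _ => isClosed_closure)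
        fun i j => F.presheaf.isOpen_setOf_germ_eq (s i) (s j)⟩
  have hWV_le_U i : W ⊓ V i ≤ U i := fun x hx => hVU i (subset_closure hx.2)
  have hcover : W ≤ ⨆ i, W ⊓ V i := fun x hx =>
    Opens.mem_iSup.mpr ((hVcov x).imp fun _ hi => ⟨hx, hi⟩)
  have hcompat : TopCat.Presheaf.IsCompatible F.presheaf (fun i => W ⊓ V i)
      fun i => F.presheaf.map (homOfLE (hWV_le_U i)).op (s i) := by
    intro i j
    refine TopCat.Presheaf.section_ext F _ _ _ fun y hy => ?_
    obtain ⟨_, _, hij⟩ := hy.1.1 i j (subset_closure hy.1.2) (subset_closure hy.2.2)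
    simpa only [TopCat.Presheaf.germ_res_apply] using hij
  obtain ⟨t, ht, -⟩ :=
    F.existsUnique_gluing' _ W (fun i => homOfLE inf_le_left) hcover _ hcompat
  exact ⟨W, t, fun x hx i j hi hj => ⟨hVU i hi, hVU j hj, hx i j _ _⟩, ht⟩

/-- **partial gluing lemma.** Let `X` be a topological space, `(U i)` and `(V i)`
open covers of `X` with `(closure (V i))` locally finite and `closure (V i) ⊆ U i`, `F` a sheaf of
sets on `X`, and `s i ∈ F(U i)` a family of sections.  Let
`A = { x | for all i j with x ∈ U i ∩ U j, the germs of s i and s j at x agree }`.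
Then there are an open `W ⊆ X` containing `A` and a section `t ∈ F(W)` with
`t|_{W ∩ V i} = s i|_{W ∩ V i}` for all `i`. -/
theorem partial_gluing
    {X : TopCat.{u}} (F : TopCat.Sheaf (Type u) X) {I : Type u}
    (U V : I → Opens X)
    (hUcov : ∀ x : X, ∃ i, x ∈ U i)
    (hVcov : ∀ x : X, ∃ i, x ∈ V i)
    (hVU : ∀ i, closure (V i : Set X) ⊆ (U i : Set X))
    (hlf : LocallyFinite fun i => closure (V i : Set X))
    (s : ∀ i, F.val.obj (op (U i))) :
    ∃ (W : Opens X) (t : F.val.obj (op W)),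
      (∀ x : X,
        (∀ i j (hi : x ∈ U i) (hj : x ∈ U j),
          F.presheaf.germ (U i) x hi (s i) = F.presheaf.germ (U j) x hj (s j)) → x ∈ W) ∧
      ∀ i, F.val.map (homOfLE (inf_le_left : W ⊓ V i ≤ W)).op t =
        F.val.map (homOfLE (show W ⊓ V i ≤ U i from fun x hx =>
          hVU i (subset_closure hx.2))).op (s i) :=
  partial_gluing_general F U V hVcov hVU hlf s
end

section
/- With the notation of the partial gluing lemma, the set W = { x ∈ X : for all i,j ∈ I(x), the germs [s_i]_x and [s_j]_x agree }, where I(x) = { k ∈ I : x ∈ cl(V_k) }, is an open subset of X. -/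
open TopologicalSpace CategoryTheory Opposite

universe u

/-- With the notation of the partial gluing lemma, the set
`W = { x | for all i j ∈ I(x), the germs [s i]_x and [s j]_x agree }`, where
`I(x) = { k | x ∈ closure (V k) }`, is open in `X`. -/
theorem partial_gluing_W_isOpen
    {X : TopCat.{u}} (F : TopCat.Sheaf (Type u) X) {I : Type u}
    (U V : I → Opens X)
    (hUcov : ∀ x : X, ∃ i, x ∈ U i)
    (hVcov : ∀ x : X, ∃ i, x ∈ V i)
    (hVU : ∀ i, closure (V i : Set X) ⊆ (U i : Set X))
    (hlf : LocallyFinite fun i => closure (V i : Set X))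
    (s : ∀ i, F.val.obj (op (U i))) :
    IsOpen { x : X |
      ∀ i j (hi : x ∈ closure (V i : Set X)) (hj : x ∈ closure (V j : Set X)),
        F.presheaf.germ (U i) x (hVU i hi) (s i) =
        F.presheaf.germ (U j) x (hVU j hj) (s j) } := by
  rw [isOpen_iff_mem_nhds]
  intro x hx
  -- neighborhood meeting only finitely many closures
  obtain ⟨N, hN, hNfin⟩ := hlf x
  -- the finite set of indices whose closure meets N
  set T : Set I := {i | (closure (V i : Set X) ∩ N).Nonempty} with hT
  have hTfin : T.Finite := hNfin
  -- I(x)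
  set Ix : Set I := {i | x ∈ closure (V i : Set X)} with hIx
  have hIxsub : Ix ⊆ T := by
    intro i hi
    exact ⟨x, hi, mem_of_mem_nhds hN⟩
  have hIxfin : Ix.Finite := hTfin.subset hIxsub
  -- For each pair i j in Ix, get an open nbhd where restrictions agree
  have key : ∀ i ∈ Ix, ∀ j ∈ Ix, ∃ W : Opens X, x ∈ W ∧
      ∀ y ∈ W, ∀ (hi : y ∈ closure (V i : Set X)) (hj : y ∈ closure (V j : Set X)),
        F.presheaf.germ (U i) y (hVU i hi) (s i) =
        F.presheaf.germ (U j) y (hVU j hj) (s j) := by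
    intro i hi j hj
    obtain ⟨W, hxW, iU, iV, heq⟩ := F.presheaf.germ_eq x (hVU i hi) (hVU j hj) (s i) (s j)
      (hx i j hi hj)
    refine ⟨W, hxW, fun y hyW hi' hj' => ?_⟩
    calc F.presheaf.germ (U i) y (hVU i hi') (s i)
        = F.presheaf.germ W y hyW (F.presheaf.map iU.op (s i)) :=
          (F.presheaf.germ_res_apply iU y hyW (s i)).symm
      _ = F.presheaf.germ W y hyW (F.presheaf.map iV.op (s j)) := congrArg _ heq
      _ = F.presheaf.germ (U j) y (hVU j hj') (s j) :=
          F.presheaf.germ_res_apply iV y hyW (s j)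
  choose! W hxW hW using key
  -- Neighborhood avoiding closures of V k for k ∈ T \ Ix
  set B : Set X := N ∩ (⋂ k ∈ T \ Ix, (closure (V k : Set X))ᶜ) ∩
    (⋂ i ∈ Ix, ⋂ j ∈ Ix, (W i j : Set X)) with hBdef
  have hB : B ∈ nhds x := by
    refine Filter.inter_mem (Filter.inter_mem hN ?_) ?_
    · refine (Filter.biInter_mem (hTfin.subset Set.diff_subset)).mpr fun k hk => ?_
      exact IsOpen.mem_nhds isClosed_closure.isOpen_compl hk.2
    · refine (Filter.biInter_mem hIxfin).mpr fun i hi => ?_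
      refine (Filter.biInter_mem hIxfin).mpr fun j hj => ?_
      exact (W i j).isOpen.mem_nhds (hxW i hi j hj)
  refine Filter.mem_of_superset hB ?_
  rintro y ⟨⟨hyN, hyAvoid⟩, hyW⟩
  intro i j hi hj
  have hsub : ∀ k, y ∈ closure (V k : Set X) → k ∈ Ix := by
    intro k hk
    by_contra hkIx
    exact Set.mem_iInter₂.mp hyAvoid k ⟨⟨y, hk, hyN⟩, hkIx⟩ hk
  have hiIx : i ∈ Ix := hsub i hi
  have hjIx : j ∈ Ix := hsub j hj
  exact hW i hiIx j hjIx y (Set.mem_iInter₂.mp (Set.mem_iInter₂.mp hyW i hiIx) j hjIx) hi hj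
end

section
/- Let A be a group, viewed as a constant sheaf of groups on a topological space C which is simply connected and locally path-connected. Then every Čech 1-cocycle of the constant sheaf A on any open cover of C is a Čech coboundary; that is, the first Čech cohomology set H^1(C, A) is trivial. -/
/-!
A cocycle `ψ` glues the trivial bundles `U i × A`, with `A` discrete, along
`(x, a) ∼ (x, a * ψ i j x)` into a covering space of `C`: the `A`-torsor of `ψ`. A covering of a
simply connected, locally path-connected space has a continuous section, and the `A`-coordinates
`ω i` of that section in the charts are locally constant with `ω j = ω i * ψ i j`.
-/

open Topology Filter Set

section

variable {C A I : Type*} [TopologicalSpace C] [Group A]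

structure IsCechCocycle (U : I → Set C) (ψ : I → I → C → A) : Prop where
  isLocallyConstant : ∀ i j, IsLocallyConstant ((U i ∩ U j).domRestrict (ψ i j))
  mul_apply : ∀ i j k, ∀ x ∈ U i ∩ U j ∩ U k, ψ i k x = ψ i j x * ψ j k x

namespace IsCechCocycle

variable {U : I → Set C} {ψ : I → I → C → A}

theorem apply_self (hψ : IsCechCocycle U ψ) {i : I} {x : C} (hx : x ∈ U i) : ψ i i x = 1 :=
  left_eq_mul.mp (hψ.mul_apply i i i x ⟨⟨hx, hx⟩, hx⟩)

theorem mul_apply_swap (hψ : IsCechCocycle U ψ) {i j : I} {x : C} (hi : x ∈ U i)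
    (hj : x ∈ U j) : ψ i j x * ψ j i x = 1 := by
  rw [← hψ.mul_apply i j i x ⟨⟨hi, hj⟩, hi⟩, hψ.apply_self hi]

theorem eventually_apply_eq (hψ : IsCechCocycle U ψ) (hUo : ∀ i, IsOpen (U i)) {i j : I}
    {x : C} (hx : x ∈ U i ∩ U j) : ∀ᶠ y in 𝓝 x, ψ i j y = ψ i j x := by
  have hfiber := ((hUo i).inter (hUo j)).isOpenMap_subtype_val _
    ((hψ.isLocallyConstant i j).isOpen_fiber (ψ i j x))
  filter_upwards [hfiber.mem_nhds ⟨⟨x, hx⟩, rfl, rfl⟩] with _ ⟨y, hy, hyx⟩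
  exact hyx ▸ hy

def torsorSetoid (hψ : IsCechCocycle U ψ) : Setoid (Σ i, U i × A) where
  r p q := (p.2.1 : C) = q.2.1 ∧ q.2.2 = p.2.2 * ψ p.1 q.1 p.2.1
  iseqv := by
    refine ⟨fun ⟨i, x, a⟩ => ⟨rfl, by rw [hψ.apply_self x.2, mul_one]⟩, ?_, ?_⟩
    · rintro ⟨i, x, a⟩ ⟨j, y, b⟩ ⟨hxy, hb⟩
      dsimp only at hxy hb ⊢
      refine ⟨hxy.symm, ?_⟩
      rw [hb, ← hxy, mul_assoc, hψ.mul_apply_swap x.2 (hxy ▸ y.2), mul_one]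
    · rintro ⟨i, x, a⟩ ⟨j, y, b⟩ ⟨k, z, c⟩ ⟨hxy, hb⟩ ⟨hyz, hc⟩
      dsimp only at hxy hb hyz hc ⊢
      refine ⟨hxy.trans hyz, ?_⟩
      rw [hc, hb, ← hxy, mul_assoc, ← hψ.mul_apply i j k x ⟨⟨x.2, hxy ▸ y.2⟩, hxy ▸ hyz ▸ z.2⟩]

abbrev Torsor (hψ : IsCechCocycle U ψ) : Type _ := Quotient hψ.torsorSetoid

def proj (hψ : IsCechCocycle U ψ) : hψ.Torsor → C :=
  Quotient.lift (fun p => (p.2.1 : C)) fun _ _ h => h.1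

def chart (hψ : IsCechCocycle U ψ) (i : I) (p : U i × A) : hψ.Torsor :=
  Quotient.mk _ ⟨i, p⟩

theorem chart_eq_chart_iff (hψ : IsCechCocycle U ψ) {i j : I} {x : U i} {y : U j} {a b : A} :
    hψ.chart i (x, a) = hψ.chart j (y, b) ↔ (x : C) = y ∧ b = a * ψ i j x :=
  Quotient.eq

@[simp]
theorem proj_chart (hψ : IsCechCocycle U ψ) (i : I) (p : U i × A) :
    hψ.proj (hψ.chart i p) = p.1 :=
  rfl

theorem chart_injective (hψ : IsCechCocycle U ψ) (i : I) : Function.Injective (hψ.chart i) := by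
  rintro ⟨x, a⟩ ⟨y, b⟩ h
  obtain ⟨hxy, hb⟩ := hψ.chart_eq_chart_iff.mp h
  rw [hψ.apply_self x.2, mul_one] at hb
  exact Prod.ext (Subtype.ext hxy) hb.symm

theorem exists_chart_eq (hψ : IsCechCocycle U ψ) {e : hψ.Torsor} {i : I} {x : C} (hx : x ∈ U i)
    (he : hψ.proj e = x) : ∃ a, hψ.chart i (⟨x, hx⟩, a) = e := by
  induction e using Quotient.inductionOn with
  | h p =>
    obtain ⟨j, y, b⟩ := p
    subst he
    refine ⟨b * ψ j i y, Quotient.sound ⟨rfl, ?_⟩⟩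
    change b = b * ψ j i y * ψ i j y
    rw [mul_assoc, hψ.mul_apply_swap y.2 hx, mul_one]

theorem range_chart (hψ : IsCechCocycle U ψ) (i : I) :
    range (hψ.chart i) = hψ.proj ⁻¹' U i := by
  ext e
  refine ⟨?_, fun he => ?_⟩
  · rintro ⟨p, rfl⟩
    exact p.1.2
  · obtain ⟨a, ha⟩ := hψ.exists_chart_eq he rfl
    exact ⟨_, ha⟩

variable [TopologicalSpace A]

theorem continuous_proj (hψ : IsCechCocycle U ψ) : Continuous hψ.proj :=
  continuous_quot_lift _ (continuous_sigma fun _ => continuous_subtype_val.comp continuous_fst)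

theorem continuous_chart (hψ : IsCechCocycle U ψ) (i : I) : Continuous (hψ.chart i) :=
  continuous_quotient_mk'.comp continuous_sigmaMk

variable [DiscreteTopology A]

theorem isOpenMap_quotient_mk (hψ : IsCechCocycle U ψ) (hUo : ∀ i, IsOpen (U i)) :
    IsOpenMap (Quotient.mk hψ.torsorSetoid) := by
  -- A point of the saturation of `W` near `⟨j, y, b⟩` is identified with a point of `W` in the
  -- chart `i` of a witness `⟨i, z, a⟩ ∈ W`, because `ψ i j` is locally constant.
  intro W hW
  rw [← isQuotientMap_quotient_mk'.isOpen_preimage, isOpen_sigma_iff]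
  intro j
  rw [isOpen_iff_mem_nhds]
  rintro ⟨y, b⟩ ⟨⟨i, z, a⟩, hzW, hzy⟩
  obtain ⟨hzy, hb⟩ := Quotient.exact hzy
  dsimp only at hzy hb
  have hslice : IsOpen {x : U i | (⟨i, x, a⟩ : Σ i, U i × A) ∈ W} :=
    hW.preimage (continuous_sigmaMk.comp (Continuous.prodMk_left a))
  have hsliceC : ∀ᶠ x in 𝓝 (y : C), ∃ hx : x ∈ U i, (⟨i, ⟨x, hx⟩, a⟩ : Σ i, U i × A) ∈ W := by
    filter_upwards [((hUo i).isOpenMap_subtype_val _ hslice).mem_nhds ⟨z, hzW, hzy⟩]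
      with _ ⟨x, hx, hxe⟩
    exact hxe ▸ ⟨x.2, hx⟩
  have hψeq := hψ.eventually_apply_eq hUo (x := y) ⟨hzy ▸ z.2, y.2⟩
  have hnear : ∀ᶠ x in 𝓝 (y : C), ∀ hx : x ∈ U j,
      Quotient.mk _ ⟨j, ⟨x, hx⟩, b⟩ ∈ Quotient.mk hψ.torsorSetoid '' W := by
    filter_upwards [hsliceC, hψeq] with x ⟨_, hxW⟩ hψx hxj
    exact ⟨_, hxW, Quotient.sound ⟨rfl, by rw [hb, hψx, hzy]⟩⟩
  rw [nhds_prod_eq, nhds_discrete A, prod_pure, mem_map]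
  exact ((continuous_subtype_val.tendsto y).eventually hnear).mono fun x hx => hx x.2

theorem isOpenEmbedding_chart (hψ : IsCechCocycle U ψ)
    (hUo : ∀ i, IsOpen (U i)) (i : I) : IsOpenEmbedding (hψ.chart i) :=
  .of_continuous_injective_isOpenMap (hψ.continuous_chart i) (hψ.chart_injective i)
    ((hψ.isOpenMap_quotient_mk hUo).comp isOpenMap_sigmaMk)

theorem isEvenlyCovered_proj (hψ : IsCechCocycle U ψ)
    (hUo : ∀ i, IsOpen (U i)) {i : I} {x : C} (hx : x ∈ U i) :
    IsEvenlyCovered hψ.proj x A := by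
  let H := ((hψ.isOpenEmbedding_chart hUo i).isEmbedding.toHomeomorph.trans
    (Homeomorph.setCongr (hψ.range_chart i))).symm
  refine ⟨inferInstance, U i, hx, hUo i, (hUo i).preimage hψ.continuous_proj, H, fun e => ?_⟩
  have hHe : hψ.chart i (H e) = e := congrArg Subtype.val (H.symm_apply_apply e)
  rw [← hHe, proj_chart]

theorem isCoveringMap_proj (hψ : IsCechCocycle U ψ)
    (hUo : ∀ i, IsOpen (U i)) (hUcov : ∀ x, ∃ i, x ∈ U i) : IsCoveringMap hψ.proj := fun x =>
  let ⟨_, hx⟩ := hUcov x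
  (hψ.isEvenlyCovered_proj hUo hx).to_isEvenlyCovered_preimage

theorem exists_coboundary_of_section (hψ : IsCechCocycle U ψ)
    (hUo : ∀ i, IsOpen (U i)) {s : C → hψ.Torsor} (hs : Continuous s)
    (hps : ∀ x, hψ.proj (s x) = x) :
    ∃ ω : I → C → A,
      (∀ i, IsLocallyConstant ((U i).domRestrict (ω i))) ∧
      ∀ i j, ∀ x ∈ U i ∩ U j, ψ i j x = (ω i x)⁻¹ * ω j x := by
  classical
  choose ω hω using fun i x (hx : x ∈ U i) => hψ.exists_chart_eq hx (hps x)
  refine ⟨fun i x => if hx : x ∈ U i then ω i x hx else 1, fun i => ?_, ?_⟩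
  · have hcont : Continuous fun x : U i => ((x, ω i x x.2) : U i × A) := by
      rw [(hψ.isOpenEmbedding_chart hUo i).isEmbedding.continuous_iff]
      simpa only [Function.comp_def, hω] using hs.comp continuous_subtype_val
    refine (IsLocallyConstant.iff_continuous _).mpr ((continuous_snd.comp hcont).congr fun x => ?_)
    exact (dif_pos x.2).symm
  · rintro i j x ⟨hi, hj⟩
    obtain ⟨-, hij⟩ := hψ.chart_eq_chart_iff.mp ((hω i x hi).trans (hω j x hj).symm)
    simp only [dif_pos hi, dif_pos hj]
    exact eq_inv_mul_of_mul_eq hij.symm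

end IsCechCocycle

end

theorem IsCoveringMap.exists_continuous_section {E X : Type*} [TopologicalSpace E]
    [TopologicalSpace X] [SimplyConnectedSpace X] [LocallyPathConnectedSpace X] {p : E → X}
    (hp : IsCoveringMap p) (e : E) : ∃ s : C(X, E), ∀ x, p (s x) = x := by
  obtain ⟨s, ⟨-, hs⟩, -⟩ := hp.existsUnique_continuousMap_lifts (.id X) (p e) e rfl
  exact ⟨s, congrFun hs⟩

/-- Let `A` be a group, viewed as a constant sheaf on a simply connected and
locally path-connected topological space `C`.  Then every Čech 1-cocycle of the constant sheaf
`A` on any open cover `(U i)` of `C` is a coboundary: there are locally constant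
`ω i : U i → A` with `ψ i j = (ω i)⁻¹ · (ω j)` on `U i ∩ U j`; that is, `H¹(C, A)` is trivial. -/
theorem cech_H1_of_constant_sheaf_trivial
    {C : Type*} [TopologicalSpace C] [SimplyConnectedSpace C] [LocallyPathConnectedSpace C]
    {A : Type*} [Group A] {I : Type*}
    (U : I → Set C)
    (hUo : ∀ i, IsOpen (U i))
    (hUcov : ∀ x : C, ∃ i, x ∈ U i)
    (ψ : I → I → C → A)
    (hlc : ∀ i j, IsLocallyConstant ((U i ∩ U j).restrict (ψ i j)))
    (hcoc : ∀ i j k, ∀ x ∈ U i ∩ U j ∩ U k, ψ i k x = ψ i j x * ψ j k x) :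
    ∃ ω : I → C → A,
      (∀ i, IsLocallyConstant ((U i).restrict (ω i))) ∧
      ∀ i j, ∀ x ∈ U i ∩ U j, ψ i j x = (ω i x)⁻¹ * ω j x := by
  let _ : TopologicalSpace A := ⊥
  have : DiscreteTopology A := ⟨rfl⟩
  have hψ : IsCechCocycle U ψ := ⟨hlc, hcoc⟩
  obtain ⟨x₀⟩ : Nonempty C := inferInstance
  obtain ⟨i₀, hx₀⟩ := hUcov x₀
  obtain ⟨s, hs⟩ := (hψ.isCoveringMap_proj hUo hUcov).exists_continuous_section
    (hψ.chart i₀ (⟨x₀, hx₀⟩, 1))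
  exact hψ.exists_coboundary_of_section hUo s.continuous hs
end
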